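/- Let G = ([n], E) be a graph and i ≥ 1. For each size-i subset P of [n] and each prime power q, the set of i-dimensional totally-isotropic subspaces U of the graphical matrix space B_G ≤ Λ(n,q) whose lexicographically-first nonzero Plücker coordinate is at P is nonempty if and only if P is an independent set of G. -/

import Mathlib

open Matrix

def elemAlt {F : Type} [Field F] {n : ℕ} (i j : Fin n) : Matrix (Fin n) (Fin n) F :=
  fun a b => if a = i ∧ b = j then 1 else if a = j ∧ b = i then -1 else 0

noncomputable def graphSpace {n : ℕ} (F : Type) [Field F] (G : SimpleGraph (Fin n)) :
    Submodule F (Matrix (Fin n) (Fin n) F) :=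
  Submodule.span F {M | ∃ i j, G.Adj i j ∧ M = elemAlt i j}

def IsTotallyIsotropic {F : Type} [Field F] {n : ℕ}
    (𝓑 : Submodule F (Matrix (Fin n) (Fin n) F)) (U : Submodule F (Fin n → F)) : Prop :=
  ∀ u ∈ U, ∀ v ∈ U, ∀ B ∈ 𝓑, u ⬝ᵥ B *ᵥ v = 0

def PluckerNonzero {F : Type} [Field F] {n i : ℕ} (T : Matrix (Fin n) (Fin i) F)
    (R : Finset (Fin n)) : Prop :=
  ∃ g : Fin i → Fin n, Function.Injective g ∧ Set.range g = ↑R ∧ (T.submatrix g id).det ≠ 0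

def LexLt {n : ℕ} (A B : Finset (Fin n)) : Prop :=
  List.Lex (· < ·) (A.sort (· ≤ ·)) (B.sort (· ≤ ·))

/-! A totally-isotropic `U` for `B_G` is one with `u a * v b = u b * v a` for all `u, v ∈ U` and
every edge `{a, b}`. If the Plücker coordinate of `U` at `P` is nonzero, the `P`-rows of a basis
matrix are invertible, so `U` projects onto all of `F^P`; an edge `{a, b}` inside `P` then yields
`u, v ∈ U` with `u a = v b = 1` and `u b = v a = 0`. Conversely, if `P` is independent, every
edge has an endpoint outside `P`, where all vectors of the coordinate subspace `span {e_j | j ∈ P}`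
vanish, and every nonzero Plücker coordinate of that subspace sits at a subset of `P`, i.e. at `P`
itself. -/

section Isotropy

variable {F : Type} [Field F] {n : ℕ}

theorem dotProduct_elemAlt_mulVec {a b : Fin n} (hab : a ≠ b) (u v : Fin n → F) :
    u ⬝ᵥ (elemAlt a b : Matrix (Fin n) (Fin n) F) *ᵥ v = u a * v b - u b * v a := by
  have hsingle : (elemAlt a b : Matrix (Fin n) (Fin n) F) = single a b 1 - single b a 1 := by
    ext r c
    simp only [elemAlt, Matrix.sub_apply, single_apply]
    grind
  rw [hsingle, sub_mulVec, dotProduct_sub, single_mulVec, single_mulVec]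
  simp [dotProduct, Function.update_apply]

theorem isTotallyIsotropic_graphSpace_iff {G : SimpleGraph (Fin n)}
    {U : Submodule F (Fin n → F)} :
    IsTotallyIsotropic (graphSpace F G) U ↔
      ∀ a b, G.Adj a b → ∀ u ∈ U, ∀ v ∈ U, u a * v b = u b * v a := by
  constructor
  · intro hU a b hab u hu v hv
    have := hU u hu v hv _ (Submodule.subset_span ⟨a, b, hab, rfl⟩)
    rwa [dotProduct_elemAlt_mulVec hab.ne, sub_eq_zero] at this
  · intro hU u hu v hv B hB
    induction hB using Submodule.span_induction with
    | mem B hB =>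
      obtain ⟨a, b, hab, rfl⟩ := hB
      rw [dotProduct_elemAlt_mulVec hab.ne, sub_eq_zero]
      exact hU a b hab u hu v hv
    | zero => simp
    | add B C _ _ hB hC => rw [add_mulVec, dotProduct_add, hB, hC, add_zero]
    | smul c B _ hB => rw [smul_mulVec, dotProduct_smul, hB, smul_zero]

theorem isTotallyIsotropic_graphSpace_of_supported {G : SimpleGraph (Fin n)}
    {U : Submodule F (Fin n → F)} {P : Finset (Fin n)} (hP : ∀ a ∈ P, ∀ b ∈ P, ¬G.Adj a b)
    (hU : ∀ u ∈ U, ∀ r ∉ P, u r = 0) :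
    IsTotallyIsotropic (graphSpace F G) U := by
  refine isTotallyIsotropic_graphSpace_iff.2 fun a b hab u hu v hv => ?_
  by_cases ha : a ∈ P
  · have hb : b ∉ P := fun hb => hP a ha b hb hab
    rw [hU u hu b hb, hU v hv b hb, mul_zero, zero_mul]
  · rw [hU u hu a ha, hU v hv a ha, mul_zero, zero_mul]

end Isotropy

section ColumnSpan

variable {R : Type*} [CommSemiring R] {m k : Type*}

theorem mem_span_range_transpose_iff [Fintype k] {T : Matrix m k R} {w : m → R} :
    w ∈ Submodule.span R (Set.range Tᵀ) ↔ ∃ c, T *ᵥ c = w := by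
  rw [show Set.range Tᵀ = Set.range T.col from rfl, ← T.range_mulVecLin]
  rfl

theorem apply_eq_zero_of_mem_span_range_transpose [Fintype k] {T : Matrix m k R} {w : m → R}
    (hw : w ∈ Submodule.span R (Set.range Tᵀ)) {r : m} (hr : T r = 0) : w r = 0 := by
  obtain ⟨c, rfl⟩ := mem_span_range_transpose_iff.1 hw
  change T r ⬝ᵥ c = 0
  rw [hr, zero_dotProduct]

theorem one_submatrix_id_apply_eq_zero [DecidableEq m] {g : k → m} {r : m}
    (hr : r ∉ Set.range g) : (1 : Matrix m m R).submatrix id g r = 0 := by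
  ext j
  exact one_apply_ne fun h => hr ⟨j, h.symm⟩

theorem linearIndependent_transpose_one_submatrix_id [DecidableEq m] {g : k → m}
    (hg : Function.Injective g) :
    LinearIndependent R ((1 : Matrix m m R).submatrix id g)ᵀ := by
  rw [transpose_submatrix, transpose_one]
  have : (1 : Matrix m m R).submatrix g id = (fun j => Pi.single j 1) ∘ g := by
    ext
    exact one_eq_pi_single
  exact this ▸ (Pi.linearIndependent_single_one m R).comp g hg

theorem exists_mem_span_range_transpose_comp_eq {F : Type*} [Field F] [Fintype k] [DecidableEq k]
    {T : Matrix m k F} {g : k → m} (hdet : (T.submatrix g id).det ≠ 0) (x : k → F) :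
    ∃ w ∈ Submodule.span F (Set.range Tᵀ), w ∘ g = x := by
  refine ⟨T *ᵥ ((T.submatrix g id)⁻¹ *ᵥ x), mem_span_range_transpose_iff.2 ⟨_, rfl⟩, ?_⟩
  change T.submatrix g id *ᵥ _ = x
  rw [mulVec_mulVec, mul_nonsing_inv _ (isUnit_iff_ne_zero.2 hdet), one_mulVec]

end ColumnSpan

section Plucker

variable {F : Type} [Field F] {n i : ℕ}

theorem PluckerNonzero.subset {T : Matrix (Fin n) (Fin i) F} {P R : Finset (Fin n)}
    (hT : ∀ r ∉ P, T r = 0) (hR : PluckerNonzero T R) : R ⊆ P := by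
  obtain ⟨g, -, hg, hdet⟩ := hR
  intro r hr
  obtain ⟨k, rfl⟩ : r ∈ Set.range g := hg ▸ hr
  by_contra hk
  exact hdet (det_eq_zero_of_row_eq_zero k fun j => congrFun (hT _ hk) j)

theorem PluckerNonzero.not_adj {G : SimpleGraph (Fin n)} {T : Matrix (Fin n) (Fin i) F}
    {P : Finset (Fin n)}
    (hT : IsTotallyIsotropic (graphSpace F G) (Submodule.span F (Set.range Tᵀ)))
    (hP : PluckerNonzero T P) : ∀ a ∈ P, ∀ b ∈ P, ¬G.Adj a b := by
  obtain ⟨g, -, hgP, hdet⟩ := hP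
  intro a ha b hb hab
  obtain ⟨s, rfl⟩ : a ∈ Set.range g := hgP ▸ ha
  obtain ⟨t, rfl⟩ : b ∈ Set.range g := hgP ▸ hb
  have hst : s ≠ t := fun h => hab.ne (congrArg g h)
  obtain ⟨u, hu, hus⟩ := exists_mem_span_range_transpose_comp_eq hdet (Pi.single s 1)
  obtain ⟨v, hv, hvt⟩ := exists_mem_span_range_transpose_comp_eq hdet (Pi.single t 1)
  have huv := isTotallyIsotropic_graphSpace_iff.1 hT _ _ hab u hu v hv
  simp only [funext_iff, Function.comp_apply] at hus hvt
  simp [hus, hvt, hst, hst.symm] at huv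

end Plucker

theorem LexLt.irrefl {n : ℕ} (P : Finset (Fin n)) : ¬LexLt P P :=
  fun h => asymm (r := List.Lex (· < ·)) h h

theorem grP_nonempty_iff_indep_general {F : Type} [Field F] {n i : ℕ}
    (G : SimpleGraph (Fin n)) (P : Finset (Fin n)) (hPcard : P.card = i) :
    (∃ (U : Submodule F (Fin n → F)) (T : Matrix (Fin n) (Fin i) F),
        LinearIndependent F Tᵀ ∧ Submodule.span F (Set.range Tᵀ) = U ∧
        IsTotallyIsotropic (graphSpace F G) U ∧ PluckerNonzero T P ∧
        ∀ R : Finset (Fin n), R.card = i → PluckerNonzero T R → ¬LexLt R P) ↔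
      ∀ u ∈ P, ∀ v ∈ P, ¬G.Adj u v := by
  constructor
  · rintro ⟨U, T, -, rfl, hiso, hP, -⟩
    exact hP.not_adj hiso
  · intro hindep
    let g := P.orderEmbOfFin hPcard
    have hg : Set.range g = P := P.range_orderEmbOfFin hPcard
    let T : Matrix (Fin n) (Fin i) F := (1 : Matrix (Fin n) (Fin n) F).submatrix id g
    have hT : ∀ r ∉ P, T r = 0 := fun r hr => one_submatrix_id_apply_eq_zero (hg ▸ hr)
    have hTP : T.submatrix g id = 1 := by
      simp only [T, submatrix_submatrix, Function.id_comp, Function.comp_id,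
        submatrix_one _ g.injective]
    refine ⟨_, T, linearIndependent_transpose_one_submatrix_id g.injective, rfl,
      isTotallyIsotropic_graphSpace_of_supported hindep
        fun u hu r hr => apply_eq_zero_of_mem_span_range_transpose hu (hT r hr),
      ⟨g, g.injective, hg, by simp [hTP]⟩, fun R hR hRT hlt => ?_⟩
    have hRP : R = P := Finset.eq_of_subset_of_card_le (hRT.subset hT) (by rw [hR, hPcard])
    exact LexLt.irrefl P (hRP ▸ hlt)

/-- `Gr(i, n, q, G)_P` — the set of `i`-dimensional totally-isotropic subspaces of the
graphical matrix space `B_G` whose lexicographically-first nonzero Plücker coordinate is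
at `P` — is nonempty if and only if `P` is an independent set of `G`. -/
theorem grP_nonempty_iff_indep {F : Type} [Field F] [Fintype F] {n i : ℕ} (hi : 1 ≤ i)
    (G : SimpleGraph (Fin n)) (P : Finset (Fin n)) (hPcard : P.card = i) :
    (∃ (U : Submodule F (Fin n → F)) (T : Matrix (Fin n) (Fin i) F),
        LinearIndependent F Tᵀ ∧ Submodule.span F (Set.range Tᵀ) = U ∧
        IsTotallyIsotropic (graphSpace F G) U ∧ PluckerNonzero T P ∧
        ∀ R : Finset (Fin n), R.card = i → PluckerNonzero T R → ¬LexLt R P) ↔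
      ∀ u ∈ P, ∀ v ∈ P, ¬G.Adj u v :=
  grP_nonempty_iff_indep_general G P hPcard
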